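/- arXiv:1305.1654 — 11 statements merged into one kernel-verified Lean document; each statement's English description precedes it below -/
import Mathlib

section
/- Let G be an abelian group, α an automorphism with α² = id, w ∈ G, β(u) = α(u) + w, and suppose (α+id)(w) has finite order q₀. If β^(2q+1) has a fixed point for some q ≥ 0, then (2q+1)·(α(w)+w) = 0, hence q₀ divides 2q+1; in particular q₀ is odd. -/
/-! Since `α` is an involution, `β ∘ β` is translation by `c = α w + w`. A point fixed by
`β^[2q+1]` is then also fixed by `(β ∘ β)^[2q+1]`, which is translation by `(2q+1) • c`. -/

open Function

theorem Function.IsPeriodicPt.nsmul_eq_zero_of_iterate_eq_add_right {M : Type*}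
    [AddLeftCancelMonoid M] {f : M → M} {k n : ℕ} {c x : M} (hf : f^[k] = (· + c))
    (hx : IsPeriodicPt f n x) : n • c = 0 := by
  have hkn : IsPeriodicPt f (k * n) x := hx.const_mul k
  rw [IsPeriodicPt, IsFixedPt, iterate_mul, hf, add_right_iterate] at hkn
  exact add_eq_left.mp hkn

theorem iterate_two_add_const_of_involutive {G F : Type*} [AddCommMonoid G] [FunLike F G G]
    [AddMonoidHomClass F G G] (α : F) (hα : ∀ g, α (α g) = g) (w : G) :
    (fun u ↦ α u + w)^[2] = (· + (α w + w)) := by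
  funext u
  simp only [iterate_succ, iterate_zero, comp_apply, id, map_add, hα]
  exact add_assoc u _ _

theorem stmt_4_general {G : Type*} [AddCommGroup G] (α : G ≃+ G) (hα : ∀ g, α (α g) = g)
    (w : G) (β : G → G) (hβ : ∀ u, β u = α u + w) (q : ℕ)
    (hfix : ∃ u : G, β^[2 * q + 1] u = u) :
    (2 * q + 1) • (α w + w) = 0 ∧ addOrderOf (α w + w) ∣ (2 * q + 1) ∧
      Odd (addOrderOf (α w + w)) := by
  obtain ⟨u, hu⟩ := hfix
  have hβ2 : β^[2] = (· + (α w + w)) := by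
    rw [funext hβ]
    exact iterate_two_add_const_of_involutive α hα w
  have hzero := IsPeriodicPt.nsmul_eq_zero_of_iterate_eq_add_right hβ2 hu
  have hdvd := addOrderOf_dvd_of_nsmul_eq_zero hzero
  exact ⟨hzero, hdvd, (odd_two_mul_add_one q).of_dvd_nat hdvd⟩

/-- If `(α + id)(w)` has finite order `q₀` and `β^[2q+1]` has a fixed point, then
`(2q+1) • (α w + w) = 0`, so `q₀ ∣ 2q+1`; in particular `q₀` is odd. -/
theorem stmt_4 {G : Type*} [AddCommGroup G] (α : G ≃+ G) (hα : ∀ g, α (α g) = g)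
    (w : G) (β : G → G) (hβ : ∀ u, β u = α u + w)
    (hfin : IsOfFinAddOrder (α w + w)) (q : ℕ)
    (hfix : ∃ u : G, β^[2 * q + 1] u = u) :
    (2 * q + 1) • (α w + w) = 0 ∧ addOrderOf (α w + w) ∣ (2 * q + 1) ∧
      Odd (addOrderOf (α w + w)) :=
  stmt_4_general α hα w β hβ q hfix
end

section
/- Let G be an abelian group, α an automorphism with α² = id, w ∈ G, β(u) = α(u) + w, q₀ the (finite) order of (α+id)(w). If q₀ = 2q+1 is odd and (q·(α+id) + id)(w) ∈ (α - id)(G), then β^(q₀) has a fixed point; i.e., an odd order orbit of β exists. -/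
/-!
Since `α` is an involution, `β² u = u + (α w + w)`, so `β^[2q]` is translation by `q • (α w + w)`
and `β^[2q+1] u = α u + q • (α w + w) + w`. A fixed point of `β^[2q+1]` is therefore a solution
of `α u - u = -(q • (α w + w) + w)`, and `u = -g` is one whenever `α g - g = q • (α w + w) + w`.
-/

section InvolutiveAffine

variable {G F : Type*} [FunLike F G G] {α : F} {w : G} {β : G → G}

theorem iterate_two_of_involutive_affine [AddCommMonoid G] [AddMonoidHomClass F G G]
    (hα : ∀ g, α (α g) = g) (hβ : ∀ u, β u = α u + w) (u : G) :
    β^[2] u = u + (α w + w) := by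
  rw [Function.iterate_succ_apply', Function.iterate_one, hβ, hβ, map_add, hα, add_assoc]

theorem iterate_two_mul_of_involutive_affine [AddCommMonoid G] [AddMonoidHomClass F G G]
    (hα : ∀ g, α (α g) = g) (hβ : ∀ u, β u = α u + w) (k : ℕ) (u : G) :
    β^[2 * k] u = u + k • (α w + w) := by
  have hsq : β^[2] = (· + (α w + w)) := funext (iterate_two_of_involutive_affine hα hβ)
  rw [Function.iterate_mul, hsq, add_right_iterate_apply]

theorem iterate_two_mul_add_one_neg_of_involutive_affine [AddCommGroup G]
    [AddMonoidHomClass F G G] (hα : ∀ g, α (α g) = g) (hβ : ∀ u, β u = α u + w) {k : ℕ} {g : G}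
    (hg : α g - g = k • (α w + w) + w) :
    β^[2 * k + 1] (-g) = -g := by
  rw [Function.iterate_succ_apply, iterate_two_mul_of_involutive_affine hα hβ, hβ, map_neg,
    sub_eq_iff_eq_add.mp hg]
  abel

end InvolutiveAffine

/-- If the order `q₀` of `(α + id)(w)` is odd, `q₀ = 2q+1`, and
`(q(α+id) + id)(w) = q • (α w + w) + w` lies in `(α - id)(G)`, then `β^[q₀]` has a
fixed point, i.e. an odd order orbit of `β` exists. -/
theorem stmt_5 {G : Type*} [AddCommGroup G] (α : G ≃+ G) (hα : ∀ g, α (α g) = g)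
    (w : G) (β : G → G) (hβ : ∀ u, β u = α u + w) (q : ℕ)
    (hq : addOrderOf (α w + w) = 2 * q + 1)
    (hmem : ∃ g : G, α g - g = q • (α w + w) + w) :
    ∃ u : G, β^[addOrderOf (α w + w)] u = u := by
  obtain ⟨g, hg⟩ := hmem
  rw [hq]
  exact ⟨-g, iterate_two_mul_add_one_neg_of_involutive_affine hα hβ hg⟩
end

section
/- Let G be an abelian group, α an automorphism with α² = id and (α - id)(G) = ker(α + id), w ∈ G with (α+id)(w) of finite odd order q₀ = 2q+1. Then β(u) = α(u) + w has a fixed point of β^(q₀), i.e., odd order orbits exist. -/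
/-!
With `s = α w + w`, which `α` fixes, `β ∘ β` is translation by `s`, so
`β^[2q+1] u = α u + w + q • s`. A fixed point of `β^[2q+1]` is thus a `u` with
`u - α u = w + q • s`, and such a `u` exists because `w + q • s` lies in `ker (α + id)`:
`(α + id)(w + q • s) = (2q+1) • s = 0` when `2q+1` is the order of `s`.
-/

section Involution

variable {G : Type*} [AddCommGroup G] {α : G ≃+ G}

theorem iterate_two_mul_add_one_affine (hα : Function.Involutive α) (w : G) (k : ℕ) (u : G) :
    (fun u => α u + w)^[2 * k + 1] u = α u + w + k • (α w + w) := by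
  induction k with
  | zero => simp
  | succ k ih =>
    rw [show 2 * (k + 1) + 1 = 2 + (2 * k + 1) by ring, Function.iterate_add_apply, ih]
    simp only [Function.iterate_succ_apply, Function.iterate_zero_apply, map_add, map_nsmul,
      hα u, hα w, succ_nsmul]
    abel

theorem map_add_self_add_nsmul (hα : Function.Involutive α) (w : G) (q : ℕ) :
    α (w + q • (α w + w)) + (w + q • (α w + w)) = (2 * q + 1) • (α w + w) := by
  simp only [map_add, map_nsmul, hα w, add_nsmul, one_nsmul, two_mul, nsmul_add]
  abel

theorem iterate_affine_neg_eq_neg (hα : Function.Involutive α) {w g : G} {q : ℕ}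
    (hg : α g - g = w + q • (α w + w)) :
    (fun u => α u + w)^[2 * q + 1] (-g) = -g := by
  rw [iterate_two_mul_add_one_affine hα, map_neg, add_assoc, ← hg]
  abel

end Involution

theorem stmt_7_general {G : Type*} [AddCommGroup G] (α : G ≃+ G) (hα : ∀ g, α (α g) = g)
    (hker : ∀ x : G, (∃ g : G, α g - g = x) ↔ α x + x = 0)
    (w : G) (β : G → G) (hβ : ∀ u, β u = α u + w)
    (hodd : Odd (addOrderOf (α w + w))) :
    ∃ u : G, β^[addOrderOf (α w + w)] u = u := by
  obtain ⟨q, hq⟩ := hodd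
  obtain rfl : β = fun u => α u + w := funext hβ
  have hmem : α (w + q • (α w + w)) + (w + q • (α w + w)) = 0 := by
    rw [map_add_self_add_nsmul hα, ← hq, addOrderOf_nsmul_eq_zero]
  obtain ⟨g, hg⟩ := (hker _).mpr hmem
  exact ⟨-g, hq ▸ iterate_affine_neg_eq_neg hα hg⟩

/-- If `(α - id)(G) = ker (α + id)` and the order `q₀` of `(α + id)(w)` is finite and
odd, then `β^[q₀]` has a fixed point, i.e. odd order orbits exist. -/
theorem stmt_7 {G : Type*} [AddCommGroup G] (α : G ≃+ G) (hα : ∀ g, α (α g) = g)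
    (hker : ∀ x : G, (∃ g : G, α g - g = x) ↔ α x + x = 0)
    (w : G) (β : G → G) (hβ : ∀ u, β u = α u + w)
    (hfin : IsOfFinAddOrder (α w + w)) (hodd : Odd (addOrderOf (α w + w))) :
    ∃ u : G, β^[addOrderOf (α w + w)] u = u :=
  stmt_7_general α hα hker w β hβ hodd
end

section
/- Let G be an abelian group, α an automorphism with α² = id, w ∈ G, β(u) = α(u) + w, q₀ the finite order of (α+id)(w), with q₀ = 2q+1 odd. Then the set of fixed points of β^(q₀) equals the preimage (α - id)^{-1}{ -(q·(α+id)(w) + w) }, and if nonempty it has the same cardinality as ker(α - id). -/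
/-!
Write `c = α w + w`. Since `α` is an involution, `β² u = u + c`, so `β^(2q+1) u = α u + (q • c + w)`
(using `α c = c`), and `u` is fixed exactly when `(α - id) u = -(q • c + w)`. A nonempty fiber of
the homomorphism `α - id` is a translate of its kernel.
-/

section InvolutiveAffine

variable {G F : Type*} [AddCommGroup G] [FunLike F G G] [AddMonoidHomClass F G G] {α : F}
  {w : G} {β : G → G}

theorem iterate_two_mul_apply_of_involutive (hα : ∀ g, α (α g) = g) (hβ : ∀ u, β u = α u + w)
    (k : ℕ) (u : G) : β^[2 * k] u = u + k • (α w + w) := by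
  induction k generalizing u with
  | zero => simp
  | succ k ih =>
    rw [Nat.mul_succ, Function.iterate_add_apply, ih, Function.iterate_succ_apply,
      Function.iterate_one, hβ, hβ, map_add, hα, succ_nsmul]
    abel

theorem iterate_two_mul_add_one_apply_of_involutive (hα : ∀ g, α (α g) = g)
    (hβ : ∀ u, β u = α u + w) (k : ℕ) (u : G) :
    β^[2 * k + 1] u = α u + (k • (α w + w) + w) := by
  have hc : α (k • (α w + w)) = k • (α w + w) := by rw [map_nsmul, map_add, hα, add_comm]
  rw [Function.iterate_succ_apply', iterate_two_mul_apply_of_involutive hα hβ, hβ, map_add, hc,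
    add_assoc]

theorem iterate_two_mul_add_one_eq_self_iff_of_involutive (hα : ∀ g, α (α g) = g)
    (hβ : ∀ u, β u = α u + w) (k : ℕ) (u : G) :
    β^[2 * k + 1] u = u ↔ α u - u = -(k • (α w + w) + w) := by
  rw [iterate_two_mul_add_one_apply_of_involutive hα hβ, eq_neg_iff_add_eq_zero,
    sub_add_eq_add_sub, sub_eq_zero]

end InvolutiveAffine

theorem stmt_8_general {G : Type*} [AddCommGroup G] (α : G ≃+ G) (hα : ∀ g, α (α g) = g)
    (w : G) (β : G → G) (hβ : ∀ u, β u = α u + w) (q : ℕ) :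
    (∀ u : G, β^[2 * q + 1] u = u ↔ α u - u = -(q • (α w + w) + w)) ∧
      ((∃ u : G, β^[2 * q + 1] u = u) →
        Nonempty ({u : G // β^[2 * q + 1] u = u} ≃ {g : G // α g = g})) := by
  have hfix := iterate_two_mul_add_one_eq_self_iff_of_involutive hα hβ q
  refine ⟨hfix, fun ⟨u₀, hu₀⟩ => ⟨?_⟩⟩
  let f : G →+ G := α.toAddMonoidHom - AddMonoidHom.id G
  have hfiber (u : G) : β^[2 * q + 1] u = u ↔ f u = f u₀ := by
    rw [hfix, ← (hfix u₀).1 hu₀]; rfl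
  have hker (g : G) : g ∈ f.ker ↔ α g = g := AddMonoidHom.mem_ker.trans sub_eq_zero
  exact ((Equiv.subtypeEquivRight hfiber).trans (f.fiberEquivKer u₀)).trans
    (Equiv.subtypeEquivRight hker)

/-- If the order `q₀ = 2q+1` of `(α + id)(w)` is finite and odd, then the fixed point
set of `β^[q₀]` is the preimage `(α - id)⁻¹{-(q • (α w + w) + w)}`, and if it is
nonempty it has the same cardinality as `ker (α - id)`. -/
theorem stmt_8 {G : Type*} [AddCommGroup G] (α : G ≃+ G) (hα : ∀ g, α (α g) = g)
    (w : G) (β : G → G) (hβ : ∀ u, β u = α u + w) (q : ℕ)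
    (hq : addOrderOf (α w + w) = 2 * q + 1) :
    (∀ u : G, β^[2 * q + 1] u = u ↔ α u - u = -(q • (α w + w) + w)) ∧
      ((∃ u : G, β^[2 * q + 1] u = u) →
        Nonempty ({u : G // β^[2 * q + 1] u = u} ≃ {g : G // α g = g})) :=
  stmt_8_general α hα w β hβ q
end

section
/- For integers a, b with |a| ≠ |b|, let G = Z²/(Z·(a,b) + Z·(b,a)). There is an exact sequence 0 → Z/|a+b| → G → Z/|a-b| → 0, where the first map sends [z] to [z,z] and the second sends [u₁,u₂] to [u₁ - u₂]. -/
/-!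
An element `m (a, b) + n (b, a)` of `L = ℤ(a, b) + ℤ(b, a)` is diagonal only if
`(m - n)(a - b) = 0`, so for `a ≠ b` the diagonal part of `L` is `ℤ(a + b, a + b)`: this is
injectivity of `Δ`. The difference `u₁ - u₂` sends the generators of `L` to `±(a - b)`, so `r`
is well defined. Finally, if `u₁ - u₂ = k (a - b)` then `u - k (a, b)` is diagonal, so every
class in `ker r` comes from the diagonal.
-/

open QuotientAddGroup Function

namespace IntPairQuotient

section General

variable {H : AddSubgroup (ℤ × ℤ)} {m : ℤ}

theorem diag_mem_of_dvd (hm : (m, m) ∈ H) {z : ℤ} (hmz : m ∣ z) : (z, z) ∈ H := by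
  obtain ⟨k, rfl⟩ := hmz
  simpa [mul_comm] using zsmul_mem hm k

variable (H m) in
def diagHom (hm : (m, m) ∈ H) : ZMod m.natAbs →+ (ℤ × ℤ) ⧸ H :=
  ZMod.lift _ ⟨(mk' H).comp ((AddMonoidHom.id ℤ).prod (AddMonoidHom.id ℤ)),
    (eq_zero_iff _).2 (diag_mem_of_dvd hm Int.dvd_natAbs_self)⟩

theorem diagHom_intCast (hm : (m, m) ∈ H) (z : ℤ) :
    diagHom H m hm z = mk (z, z) :=
  ZMod.lift_coe _ _ z

theorem intCast_zmod_natAbs_eq_zero_iff {z : ℤ} : (z : ZMod m.natAbs) = 0 ↔ m ∣ z :=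
  (ZMod.intCast_zmod_eq_zero_iff_dvd _ _).trans Int.natAbs_dvd

theorem diagHom_injective (hm : (m, m) ∈ H) (hH : ∀ z, (z, z) ∈ H → m ∣ z) :
    Injective (diagHom H m hm) := by
  refine (injective_iff_map_eq_zero _).2 fun x hx ↦ ?_
  obtain ⟨z, rfl⟩ := ZMod.intCast_surjective x
  rw [diagHom_intCast, eq_zero_iff] at hx
  exact intCast_zmod_natAbs_eq_zero_iff.2 (hH z hx)

variable (m) in
def diffHom : ℤ × ℤ →+ ZMod m.natAbs :=
  (Int.castAddHom _).comp (AddMonoidHom.fst ℤ ℤ - AddMonoidHom.snd ℤ ℤ)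

theorem diffHom_apply (u : ℤ × ℤ) : diffHom m u = ((u.1 - u.2 : ℤ) : ZMod m.natAbs) := rfl

theorem surjective_lift_diffHom (hH : H ≤ (diffHom m).ker) :
    Surjective (lift H (diffHom m) hH) := by
  intro x
  obtain ⟨z, rfl⟩ := ZMod.intCast_surjective x
  exact ⟨mk (z, 0), by simp [diffHom_apply]⟩

theorem range_diagHom_eq_ker_lift_diffHom {n : ℤ} (hm : (m, m) ∈ H)
    (hH : H ≤ (diffHom n).ker) (hlift : ∀ u : ℤ × ℤ, n ∣ u.1 - u.2 → ∃ c, u - (c, c) ∈ H) :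
    (diagHom H m hm).range = (lift H (diffHom n) hH).ker := by
  ext x
  constructor
  · rintro ⟨y, rfl⟩
    obtain ⟨z, rfl⟩ := ZMod.intCast_surjective y
    simp [diagHom_intCast, diffHom_apply]
  · intro hx
    induction x using QuotientAddGroup.induction_on with
    | H u =>
      rw [AddMonoidHom.mem_ker, lift_mk, diffHom_apply, intCast_zmod_natAbs_eq_zero_iff] at hx
      obtain ⟨c, hc⟩ := hlift u hx
      refine ⟨c, ?_⟩
      rw [diagHom_intCast, QuotientAddGroup.eq, neg_add_eq_sub]
      exact hc

end General

section PairLattice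

variable {a b : ℤ}

variable (a b) in
abbrev pairLattice : AddSubgroup (ℤ × ℤ) := AddSubgroup.closure {((a, b) : ℤ × ℤ), (b, a)}

theorem add_add_mem_pairLattice : (a + b, a + b) ∈ pairLattice a b := by
  have hsum : ((a + b, a + b) : ℤ × ℤ) = (a, b) + (b, a) := by simp [add_comm]
  rw [hsum]
  exact add_mem (AddSubgroup.subset_closure (by simp)) (AddSubgroup.subset_closure (by simp))

theorem pairLattice_le_ker_diffHom : pairLattice a b ≤ (diffHom (a - b)).ker := by
  rw [AddSubgroup.closure_le]
  rintro u (rfl | rfl) <;>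
    simp only [SetLike.mem_coe, AddMonoidHom.mem_ker, diffHom_apply,
      intCast_zmod_natAbs_eq_zero_iff]
  · exact dvd_rfl
  · exact ⟨-1, by ring⟩

theorem dvd_of_diag_mem_pairLattice (hab : a ≠ b) {z : ℤ} (hz : (z, z) ∈ pairLattice a b) :
    a + b ∣ z := by
  obtain ⟨m, n, hmn⟩ := AddSubgroup.mem_closure_pair.1 hz
  simp only [Prod.smul_mk, smul_eq_mul, Prod.mk_add_mk, Prod.mk.injEq] at hmn
  have hmn_eq : m = n := by
    have hprod : (m - n) * (a - b) = 0 := by linear_combination hmn.1 - hmn.2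
    exact sub_eq_zero.1 ((mul_eq_zero.1 hprod).resolve_right (sub_ne_zero.2 hab))
  exact ⟨m, by rw [← hmn.1, hmn_eq]; ring⟩

theorem exists_sub_diag_mem_pairLattice {u : ℤ × ℤ} (hu : a - b ∣ u.1 - u.2) :
    ∃ c, u - (c, c) ∈ pairLattice a b := by
  obtain ⟨k, hk⟩ := hu
  refine ⟨u.1 - a * k, ?_⟩
  have hdiff : u - (u.1 - a * k, u.1 - a * k) = k • ((a, b) : ℤ × ℤ) := by
    ext <;> simp <;> linarith
  rw [hdiff]
  exact zsmul_mem (AddSubgroup.subset_closure (by simp)) k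

end PairLattice

end IntPairQuotient

open IntPairQuotient

/-- For integers `a, b` with `|a| ≠ |b|` and `G = ℤ²/(ℤ(a,b) + ℤ(b,a))`, there is a
short exact sequence `0 → ℤ/|a+b| → G → ℤ/|a-b| → 0`, where the first map sends
`[z]` to `[(z,z)]` and the second sends `[(u₁,u₂)]` to `[u₁ - u₂]`. -/
theorem stmt_10 (a b : ℤ) (h : a ^ 2 ≠ b ^ 2) :
    ∃ (Δ : ZMod (a + b).natAbs →+ (ℤ × ℤ) ⧸ AddSubgroup.closure {((a, b) : ℤ × ℤ), (b, a)})
      (r : ((ℤ × ℤ) ⧸ AddSubgroup.closure {((a, b) : ℤ × ℤ), (b, a)}) →+ ZMod (a - b).natAbs),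
      (∀ z : ℤ, Δ (z : ZMod (a + b).natAbs) = QuotientAddGroup.mk (z, z)) ∧
      (∀ u : ℤ × ℤ, r (QuotientAddGroup.mk u) = ((u.1 - u.2 : ℤ) : ZMod (a - b).natAbs)) ∧
      Function.Injective Δ ∧ Function.Surjective r ∧ Δ.range = r.ker := by
  have hab : a ≠ b := fun hab ↦ h (by rw [hab])
  exact ⟨diagHom (pairLattice a b) (a + b) add_add_mem_pairLattice,
    lift _ (diffHom (a - b)) pairLattice_le_ker_diffHom,
    diagHom_intCast _, fun _ ↦ rfl,
    diagHom_injective _ fun _ ↦ dvd_of_diag_mem_pairLattice hab,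
    surjective_lift_diffHom _,
    range_diagHom_eq_ker_lift_diffHom _ _ fun _ ↦ exists_sub_diag_mem_pairLattice⟩
end

section
/- For integers a, b with |a| ≠ |b|, let G = Z²/(Z(a,b)+Z(b,a)) and let α : G → G be the switch involution α([u₁,u₂]) = [u₂,u₁]. Then the image of α + id equals the image of the diagonal map Δ : Z/|a+b| → G, Δ([z]) = [z,z]; in particular (α+id)(G) is cyclic of order |a+b|. -/
/-!
The lattice `L = ℤ(a,b) + ℤ(b,a)` meets the diagonal exactly in `ℤ(a+b, a+b)` once `a ≠ b`:
if `m(a,b) + k(b,a) = (z,z)` then `(m - k)(a - b) = 0`, so `m = k` and `z = m(a+b)`.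
Hence `z ↦ [z,z]` embeds `ℤ/|a+b|` into `ℤ²/L`. Its image is that of `α + id`, because
`(α + id)[u₁,u₂] = [u₁+u₂, u₁+u₂]` and `[z,z] = (α + id)[z,0]`.
-/

abbrev switchLattice (a b : ℤ) : AddSubgroup (ℤ × ℤ) :=
  AddSubgroup.closure {((a, b) : ℤ × ℤ), (b, a)}

theorem diag_mem_switchLattice_iff {a b : ℤ} (hab : a ≠ b) (z : ℤ) :
    ((z, z) : ℤ × ℤ) ∈ switchLattice a b ↔ a + b ∣ z := by
  rw [AddSubgroup.mem_closure_pair]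
  constructor
  · rintro ⟨m, k, hmk⟩
    have h₁ : m * a + k * b = z := congrArg Prod.fst hmk
    have h₂ : m * b + k * a = z := congrArg Prod.snd hmk
    have hmk : m = k := by
      have : (m - k) * (a - b) = 0 := by linarith
      rcases mul_eq_zero.1 this with h | h
      · linarith
      · exact absurd (sub_eq_zero.1 h) hab
    subst hmk
    exact ⟨m, by linarith⟩
  · rintro ⟨m, rfl⟩
    exact ⟨m, m, by ext <;> simp <;> ring⟩

def switchDiag (a b : ℤ) : ZMod (a + b).natAbs →+ (ℤ × ℤ) ⧸ switchLattice a b :=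
  ZMod.lift _
    ⟨(QuotientAddGroup.mk' _).comp ((AddMonoidHom.id ℤ).prod (AddMonoidHom.id ℤ)), by
    rw [AddMonoidHom.comp_apply, QuotientAddGroup.mk'_apply, QuotientAddGroup.eq_zero_iff]
    obtain ⟨k, hk⟩ : a + b ∣ ((a + b).natAbs : ℤ) := Int.dvd_natCast.mpr dvd_rfl
    have hsum : ((a, b) : ℤ × ℤ) + (b, a) ∈ switchLattice a b :=
      add_mem (AddSubgroup.subset_closure (by simp)) (AddSubgroup.subset_closure (by simp))
    convert zsmul_mem hsum k using 1
    ext <;> simp [hk, add_comm b a, mul_comm]⟩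

@[simp]
theorem switchDiag_intCast (a b z : ℤ) :
    switchDiag a b (z : ZMod (a + b).natAbs) = QuotientAddGroup.mk (z, z) := by
  rw [switchDiag, ZMod.lift_coe]; rfl

theorem switchDiag_injective {a b : ℤ} (hab : a ≠ b) : Function.Injective (switchDiag a b) := by
  rw [injective_iff_map_eq_zero]
  intro x hx
  obtain ⟨z, rfl⟩ := ZMod.intCast_surjective x
  rw [switchDiag_intCast, QuotientAddGroup.eq_zero_iff, diag_mem_switchLattice_iff hab] at hx
  rwa [ZMod.intCast_zmod_eq_zero_iff_dvd, Int.natCast_natAbs, abs_dvd]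

theorem range_switch_add_self {a b : ℤ}
    (α : (ℤ × ℤ) ⧸ switchLattice a b → (ℤ × ℤ) ⧸ switchLattice a b)
    (hswitch : ∀ u : ℤ × ℤ, α (QuotientAddGroup.mk u) = QuotientAddGroup.mk (u.2, u.1)) :
    Set.range (fun g => α g + g) = Set.range (switchDiag a b) := by
  ext g
  constructor
  · rintro ⟨x, rfl⟩
    obtain ⟨u, rfl⟩ := QuotientAddGroup.mk_surjective x
    refine ⟨((u.1 + u.2 : ℤ) : ZMod (a + b).natAbs), ?_⟩
    dsimp only
    rw [switchDiag_intCast, hswitch, ← QuotientAddGroup.mk_add]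
    congr 1
    ext <;> simp [add_comm]
  · rintro ⟨x, rfl⟩
    obtain ⟨z, rfl⟩ := ZMod.intCast_surjective x
    refine ⟨QuotientAddGroup.mk (z, 0), ?_⟩
    dsimp only
    rw [hswitch, switchDiag_intCast, ← QuotientAddGroup.mk_add]
    congr 1
    ext <;> simp

/-- For integers `a, b` with `|a| ≠ |b|`, `G = ℤ²/(ℤ(a,b) + ℤ(b,a))` and `α` the switch
involution `α [u₁,u₂] = [u₂,u₁]`, the image of `α + id` equals the image of the
injective diagonal map `Δ : ℤ/|a+b| → G`, `Δ [z] = [(z,z)]`; in particular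
`(α + id)(G)` has order `|a+b|`. -/
theorem stmt_11 (a b : ℤ) (h : a ^ 2 ≠ b ^ 2)
    (α : ((ℤ × ℤ) ⧸ AddSubgroup.closure {((a, b) : ℤ × ℤ), (b, a)}) ≃+
      ((ℤ × ℤ) ⧸ AddSubgroup.closure {((a, b) : ℤ × ℤ), (b, a)}))
    (hswitch : ∀ u : ℤ × ℤ,
      α (QuotientAddGroup.mk u) = QuotientAddGroup.mk (u.2, u.1)) :
    ∃ Δ : ZMod (a + b).natAbs →+ (ℤ × ℤ) ⧸ AddSubgroup.closure {((a, b) : ℤ × ℤ), (b, a)},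
      (∀ z : ℤ, Δ (z : ZMod (a + b).natAbs) = QuotientAddGroup.mk (z, z)) ∧
      Function.Injective Δ ∧
      Set.range (fun g => α g + g) = Set.range Δ ∧
      Nat.card (Set.range (fun g => α g + g)) = (a + b).natAbs := by
  have hab : a ≠ b := fun hab => h (by rw [hab])
  have hrange := range_switch_add_self α hswitch
  have hinj := switchDiag_injective hab
  refine ⟨switchDiag a b, switchDiag_intCast a b, hinj, hrange, ?_⟩
  rw [hrange, Nat.card_range_of_injective hinj, Nat.card_zmod]
end

section
/- For integers a, b with |a| ≠ |b|, let G = Z²/(Z(a,b)+Z(b,a)) and α the switch involution. Then ker(α + id) has cardinality |a - b| and ker(α - id) has cardinality |a + b|. -/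
/-!
The fixed points of `α` are the classes of diagonal vectors `(n, n)`, and `(n, n)` lies in the
lattice `ℤ(a,b) + ℤ(b,a)` iff `a + b ∣ n`; likewise the `(-1)`-eigenvectors are the classes of
antidiagonal vectors `(n, -n)`, which lie in the lattice iff `a - b ∣ n`. So each eigenspace is
the image of a homomorphism `ℤ → G` with kernel `ℤ(a ∓ b)`, hence of order `|a ∓ b|`.
-/

open QuotientAddGroup

namespace SwapLattice

abbrev lattice (a b : ℤ) : AddSubgroup (ℤ × ℤ) := AddSubgroup.closure {(a, b), (b, a)}

variable {a b : ℤ}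

theorem mem_lattice_iff {x y : ℤ} :
    (x, y) ∈ lattice a b ↔ ∃ p q : ℤ, p * a + q * b = x ∧ p * b + q * a = y := by
  simp only [AddSubgroup.mem_closure_pair, Prod.ext_iff, Prod.smul_mk, Prod.fst_add,
    Prod.snd_add, smul_eq_mul]

theorem diag_mem_lattice_iff (hab : a ≠ b) (n : ℤ) : (n, n) ∈ lattice a b ↔ a + b ∣ n := by
  rw [mem_lattice_iff]
  constructor
  · rintro ⟨p, q, hx, hy⟩
    have hpq : (p - q) * (a - b) = 0 := by linear_combination hx - hy
    obtain rfl : p = q := by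
      simpa [sub_eq_zero, hab] using hpq
    exact ⟨p, by linear_combination -hx⟩
  · rintro ⟨k, rfl⟩
    exact ⟨k, k, by ring, by ring⟩

theorem antidiag_mem_lattice_iff (hsum : a + b ≠ 0) (n : ℤ) :
    (n, -n) ∈ lattice a b ↔ a - b ∣ n := by
  rw [mem_lattice_iff]
  constructor
  · rintro ⟨p, q, hx, hy⟩
    have hpq : (p + q) * (a + b) = 0 := by linear_combination hx + hy
    obtain rfl : q = -p := by
      simpa [hsum, add_eq_zero_iff_eq_neg'] using hpq
    exact ⟨p, by linear_combination -hx⟩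
  · rintro ⟨k, rfl⟩
    exact ⟨k, -k, by ring, by ring⟩

variable (a b)

def diag : ℤ →+ (ℤ × ℤ) ⧸ lattice a b := zmultiplesHom _ (mk (1, 1))

def antidiag : ℤ →+ (ℤ × ℤ) ⧸ lattice a b := zmultiplesHom _ (mk (1, -1))

@[simp]
theorem diag_apply (n : ℤ) : diag a b n = (mk (n, n) : (ℤ × ℤ) ⧸ lattice a b) := by
  simp [diag, ← mk_zsmul]

@[simp]
theorem antidiag_apply (n : ℤ) : antidiag a b n = (mk (n, -n) : (ℤ × ℤ) ⧸ lattice a b) := by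
  simp [antidiag, ← mk_zsmul]

variable {a b}

theorem ker_diag (hab : a ≠ b) : (diag a b).ker = AddSubgroup.zmultiples (a + b) := by
  ext n
  rw [AddMonoidHom.mem_ker, diag_apply, eq_zero_iff, diag_mem_lattice_iff hab,
    Int.mem_zmultiples_iff]

theorem ker_antidiag (hsum : a + b ≠ 0) :
    (antidiag a b).ker = AddSubgroup.zmultiples (a - b) := by
  ext n
  rw [AddMonoidHom.mem_ker, antidiag_apply, eq_zero_iff, antidiag_mem_lattice_iff hsum,
    Int.mem_zmultiples_iff]

theorem setOf_add_self_eq_zero_eq_range_antidiag (hab : a ≠ b)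
    (α : (ℤ × ℤ) ⧸ lattice a b → (ℤ × ℤ) ⧸ lattice a b) (hα : ∀ u, α (mk u) = mk (u.2, u.1)) :
    {g | α g + g = 0} = (antidiag a b).range := by
  ext g
  constructor
  · obtain ⟨u, rfl⟩ := mk_surjective g
    intro hu
    rw [Set.mem_ofPred_eq, hα, ← mk_add, eq_zero_iff, Prod.mk_add_mk, add_comm u.2,
      diag_mem_lattice_iff hab] at hu
    obtain ⟨k, hk⟩ := hu
    -- `u - k • (b, a)` is antidiagonal
    refine ⟨u.1 - k * b, ?_⟩
    rw [antidiag_apply, eq_iff_sub_mem, Prod.mk_sub_mk, mem_lattice_iff]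
    exact ⟨0, -k, by ring, by linear_combination hk⟩
  · rintro ⟨n, rfl⟩
    rw [Set.mem_ofPred_eq, antidiag_apply, hα, ← mk_add, eq_zero_iff, Prod.mk_add_mk,
      neg_add_cancel, add_neg_cancel]
    exact zero_mem _

theorem setOf_eq_self_eq_range_diag (hsum : a + b ≠ 0)
    (α : (ℤ × ℤ) ⧸ lattice a b → (ℤ × ℤ) ⧸ lattice a b) (hα : ∀ u, α (mk u) = mk (u.2, u.1)) :
    {g | α g = g} = (diag a b).range := by
  ext g
  constructor
  · obtain ⟨u, rfl⟩ := mk_surjective g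
    intro hu
    rw [Set.mem_ofPred_eq, hα, eq_iff_sub_mem, Prod.mk_sub_mk, ← neg_sub u.2,
      antidiag_mem_lattice_iff hsum] at hu
    obtain ⟨k, hk⟩ := hu
    refine ⟨u.1 - k * b, ?_⟩
    rw [diag_apply, eq_iff_sub_mem, Prod.mk_sub_mk, mem_lattice_iff]
    exact ⟨0, -k, by ring, by linear_combination hk⟩
  · rintro ⟨n, rfl⟩
    rw [Set.mem_ofPred_eq, diag_apply, hα]

end SwapLattice

open SwapLattice

/-- For integers `a, b` with `|a| ≠ |b|`, `G = ℤ²/(ℤ(a,b) + ℤ(b,a))` and `α` the switch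
involution, `ker (α + id)` has cardinality `|a - b|` and `ker (α - id)` has
cardinality `|a + b|`. -/
theorem stmt_12 (a b : ℤ) (h : a ^ 2 ≠ b ^ 2)
    (α : ((ℤ × ℤ) ⧸ AddSubgroup.closure {((a, b) : ℤ × ℤ), (b, a)}) ≃+
      ((ℤ × ℤ) ⧸ AddSubgroup.closure {((a, b) : ℤ × ℤ), (b, a)}))
    (hswitch : ∀ u : ℤ × ℤ,
      α (QuotientAddGroup.mk u) = QuotientAddGroup.mk (u.2, u.1)) :
    Nat.card {g : (ℤ × ℤ) ⧸ AddSubgroup.closure {((a, b) : ℤ × ℤ), (b, a)} | α g + g = 0} =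
        (a - b).natAbs ∧
      Nat.card {g : (ℤ × ℤ) ⧸ AddSubgroup.closure {((a, b) : ℤ × ℤ), (b, a)} | α g = g} =
        (a + b).natAbs := by
  have hab : a ≠ b := fun h' => h (by rw [h'])
  have hsum : a + b ≠ 0 := fun h' => h (by rw [eq_neg_of_add_eq_zero_left h', neg_sq])
  constructor
  · rw [setOf_add_self_eq_zero_eq_range_antidiag hab α hswitch, SetLike.coe_sort_coe,
      ← AddSubgroup.index_ker, ker_antidiag hsum, Int.index_zmultiples]
  · rw [setOf_eq_self_eq_range_diag hsum α hswitch, SetLike.coe_sort_coe,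
      ← AddSubgroup.index_ker, ker_diag hab, Int.index_zmultiples]
end

section
/- For integers a, b with |a| ≠ |b|, let G = Z²/(Z(a,b)+Z(b,a)) and α the switch involution. Then the subgroup (α - id)(G) equals ker(α + id). -/
/-! If `α` is an involution then `α (α g - g) = -(α g - g)`, which gives one inclusion. Conversely,
if `[u]` is killed by `α + id` then `(s, s) ∈ ℤ(a,b) + ℤ(b,a)` with `s = u₁ + u₂`, and comparing
coordinates of `m (a,b) + n (b,a) = (s, s)` gives `(m - n)(a - b) = 0`, so `m = n` and
`s = m (a + b)`. Then `[u] = α g - g` for `g = [(0, u₁ - m a)]`, since the difference of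
representatives is `m (a, b)`. -/

theorem AddMonoidHom.map_sub_self_add_sub_self_eq_zero {A : Type*} [AddCommGroup A] (α : A →+ A)
    (hα : Function.Involutive α) (g : A) : α (α g - g) + (α g - g) = 0 := by
  rw [map_sub, hα g]
  abel

lemma mem_closure_pair_swap_iff {a b x y : ℤ} :
    (x, y) ∈ AddSubgroup.closure {((a, b) : ℤ × ℤ), (b, a)} ↔
      ∃ m n : ℤ, m * a + n * b = x ∧ m * b + n * a = y := by
  simp [AddSubgroup.mem_closure_pair, Prod.ext_iff]

lemma exists_eq_mul_add_of_diag_mem_closure_pair_swap {a b s : ℤ} (hab : a ≠ b)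
    (hs : (s, s) ∈ AddSubgroup.closure {((a, b) : ℤ × ℤ), (b, a)}) : ∃ m, s = m * (a + b) := by
  obtain ⟨m, n, h₁, h₂⟩ := mem_closure_pair_swap_iff.1 hs
  have hmn : m = n := by
    have : (m - n) * (a - b) = 0 := by linear_combination h₁ - h₂
    simpa [sub_eq_zero, hab] using this
  exact ⟨m, by subst hmn; linear_combination -h₁⟩

/-- For integers `a, b` with `|a| ≠ |b|`, `G = ℤ²/(ℤ(a,b) + ℤ(b,a))` and `α` the switch
involution, the image of `α - id` equals the kernel of `α + id`. -/
theorem stmt_14 (a b : ℤ) (h : a ^ 2 ≠ b ^ 2)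
    (α : ((ℤ × ℤ) ⧸ AddSubgroup.closure {((a, b) : ℤ × ℤ), (b, a)}) ≃+
      ((ℤ × ℤ) ⧸ AddSubgroup.closure {((a, b) : ℤ × ℤ), (b, a)}))
    (hswitch : ∀ u : ℤ × ℤ,
      α (QuotientAddGroup.mk u) = QuotientAddGroup.mk (u.2, u.1)) :
    {x : (ℤ × ℤ) ⧸ AddSubgroup.closure {((a, b) : ℤ × ℤ), (b, a)} | ∃ g, α g - g = x} =
      {x : (ℤ × ℤ) ⧸ AddSubgroup.closure {((a, b) : ℤ × ℤ), (b, a)} | α x + x = 0} := by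
  have hab : a ≠ b := fun hab => h (by rw [hab])
  have hα : Function.Involutive α := fun g => by
    induction g using QuotientAddGroup.induction_on
    simp [hswitch]
  ext x
  simp only [Set.mem_ofPred_eq]
  constructor
  · rintro ⟨g, rfl⟩
    exact α.toAddMonoidHom.map_sub_self_add_sub_self_eq_zero hα g
  · intro hx
    obtain ⟨⟨u₁, u₂⟩, rfl⟩ := QuotientAddGroup.mk_surjective x
    rw [hswitch, ← QuotientAddGroup.mk_add, QuotientAddGroup.eq_zero_iff] at hx
    obtain ⟨m, hm⟩ := exists_eq_mul_add_of_diag_mem_closure_pair_swap hab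
      (s := u₁ + u₂) (by simpa [add_comm] using hx)
    refine ⟨QuotientAddGroup.mk (0, u₁ - m * a), ?_⟩
    rw [hswitch, ← QuotientAddGroup.mk_sub, QuotientAddGroup.eq]
    exact mem_closure_pair_swap_iff.2 ⟨m, 0, by simp, by
      simp only [zero_mul, add_zero, Prod.mk_sub_mk, sub_zero, zero_sub, neg_sub, Prod.neg_mk]
      linear_combination -hm⟩
end

section
/- Let G be an abelian group, α an automorphism with α² = id, w ∈ G, β(u) = α(u) + w. Suppose (α+id)(w) has finite order q₀ in G. Then every orbit of β has cardinality q₀ or 2q₀, and odd orbit cardinalities can only occur if q₀ is odd. -/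
/-!
Since `α` is an involution, `β ∘ β` is the translation `u ↦ u + c` with `c = α w + w`, all of
whose orbits have cardinality `addOrderOf c`. An orbit of `β` of cardinality `n` is an orbit of
`β ∘ β` of cardinality `n / gcd n 2`, which is `n` for odd `n` and `n / 2` for even `n`.
-/

namespace Function

variable {α : Type*} {f : α → α} {x : α}

theorem minimalPeriod_iterate_two_of_odd (h : Odd (minimalPeriod f x)) :
    minimalPeriod f^[2] x = minimalPeriod f x := by
  rw [minimalPeriod_iterate_eq_div_gcd two_ne_zero,
    h.coprime_two_right.gcd_eq_one, Nat.div_one]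

theorem minimalPeriod_eq_two_mul_of_even (h : Even (minimalPeriod f x)) :
    minimalPeriod f x = 2 * minimalPeriod f^[2] x := by
  rw [minimalPeriod_iterate_eq_div_gcd two_ne_zero,
    Nat.gcd_eq_right (even_iff_two_dvd.mp h), Nat.mul_div_cancel' (even_iff_two_dvd.mp h)]

end Function

open Function

theorem minimalPeriod_add_right {G : Type*} [AddGroup G] (c u : G) :
    minimalPeriod (· + c) u = addOrderOf c := by
  rw [addOrderOf, minimalPeriod_eq_minimalPeriod_iff]
  intro n
  simp [IsPeriodicPt, IsFixedPt, add_right_iterate, add_left_iterate]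

theorem iterate_two_affine_of_involutive {G F : Type*} [AddCommGroup G] [FunLike F G G]
    [AddMonoidHomClass F G G] (α : F) (hα : Involutive α) (w : G) :
    (fun u ↦ α u + w)^[2] = (· + (α w + w)) := by
  funext u
  simp only [iterate_succ, iterate_zero, comp_apply, id_eq, map_add, hα u]
  abel

theorem stmt_17_general {G : Type*} [AddCommGroup G] (α : G ≃+ G) (hα : ∀ g, α (α g) = g)
    (w : G) (β : G → G) (hβ : ∀ u, β u = α u + w) :
    ∀ u : G,
      (Function.minimalPeriod β u = addOrderOf (α w + w) ∨
        Function.minimalPeriod β u = 2 * addOrderOf (α w + w)) ∧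
      (Odd (Function.minimalPeriod β u) → Odd (addOrderOf (α w + w))) := by
  intro u
  obtain rfl : β = fun u ↦ α u + w := funext hβ
  have hq : minimalPeriod (fun u ↦ α u + w)^[2] u = addOrderOf (α w + w) := by
    rw [iterate_two_affine_of_involutive α hα, minimalPeriod_add_right]
  rcases Nat.even_or_odd (minimalPeriod (fun u ↦ α u + w) u) with h | h
  · refine ⟨.inr (hq ▸ minimalPeriod_eq_two_mul_of_even h), fun h' ↦ ?_⟩
    exact absurd h (Nat.not_even_iff_odd.mpr h')
  · rw [← hq, minimalPeriod_iterate_two_of_odd h]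
    exact ⟨.inl rfl, id⟩

/-- If `(α + id)(w)` has finite order `q₀`, then every orbit of `β` (every minimal
period of a point under `β`) equals `q₀` or `2q₀`, and an odd orbit cardinality can
only occur if `q₀` is odd. -/
theorem stmt_17 {G : Type*} [AddCommGroup G] (α : G ≃+ G) (hα : ∀ g, α (α g) = g)
    (w : G) (β : G → G) (hβ : ∀ u, β u = α u + w)
    (hfin : IsOfFinAddOrder (α w + w)) :
    ∀ u : G,
      (Function.minimalPeriod β u = addOrderOf (α w + w) ∨
        Function.minimalPeriod β u = 2 * addOrderOf (α w + w)) ∧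
      (Odd (Function.minimalPeriod β u) → Odd (addOrderOf (α w + w))) :=
  stmt_17_general α hα w β hβ
end

section
/- Let a = b ≠ 0 be integers, G = Z²/Z(a,a), α the switch involution on G, and w = -[(v₁,v₂)] with v₁+v₂ = c. Set q₀ = |a|/gcd(a,c) and c' = c/gcd(a,c). Then there exists an element u ∈ G with β^(q₀)(u) = u for β(u) = α(u) + w and q₀ odd if and only if q₀ is odd and c' is even. -/
/-!
For an involution `f`, the affine map `β = f + w` satisfies `β² = id + (w + f w)`, so for odd
`q = 2k + 1` a point is `β^q`-fixed iff `u - f u = w + k • (w + f w)`. In `ℤ²/ℤ(a,a)` with `f`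
the switch, the image of `id - f` is the set of classes whose coordinate sum is divisible by
`2a`, and the coordinate sum of `w + k • (w + f w)` is `-q c = -|a| c'`.
-/

section InvolutionPlusTranslation

variable {G : Type*} [AddCommGroup G] {f : G →+ G}

theorem iterate_involution_add_two_mul_apply (hf : Function.Involutive f) (w u : G) (k : ℕ) :
    (fun x => f x + w)^[2 * k] u = u + k • (w + f w) := by
  induction k with
  | zero => simp
  | succ k ih =>
    rw [Nat.mul_succ, add_comm, Function.iterate_add_apply, ih]
    simp only [Function.iterate_succ, Function.iterate_zero, Function.comp_apply, id_eq,
      map_add, map_nsmul, hf u, hf w, succ_nsmul]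
    abel

theorem iterate_involution_add_two_mul_add_one_apply (hf : Function.Involutive f) (w u : G)
    (k : ℕ) : (fun x => f x + w)^[2 * k + 1] u = f u + w + k • (w + f w) := by
  rw [Function.iterate_succ_apply, iterate_involution_add_two_mul_apply hf]

theorem exists_iterate_involution_add_two_mul_add_one_fixed_iff (hf : Function.Involutive f)
    (w : G) (k : ℕ) :
    (∃ u, (fun x => f x + w)^[2 * k + 1] u = u) ↔
      w + k • (w + f w) ∈ (AddMonoidHom.id G - f).range := by
  simp only [iterate_involution_add_two_mul_add_one_apply hf, AddMonoidHom.mem_range,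
    AddMonoidHom.sub_apply, AddMonoidHom.id_apply, sub_eq_iff_eq_add',
    eq_comm (a := _ + (w + _)), add_assoc]

end InvolutionPlusTranslation

open QuotientAddGroup

abbrev DiagQuotient (a : ℤ) : Type := (ℤ × ℤ) ⧸ AddSubgroup.closure {((a, a) : ℤ × ℤ)}

namespace DiagQuotient

variable {a : ℤ} {f : DiagQuotient a →+ DiagQuotient a}

theorem involutive_of_swap (hf : ∀ u : ℤ × ℤ, f (mk u) = mk (u.2, u.1)) :
    Function.Involutive f := by
  intro u
  obtain ⟨u, rfl⟩ := mk_surjective u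
  rw [hf, hf]

theorem mk_eq_zero_iff {p : ℤ × ℤ} :
    (mk p : DiagQuotient a) = 0 ↔ ∃ n : ℤ, p = (n * a, n * a) := by
  rw [QuotientAddGroup.eq_zero_iff, AddSubgroup.mem_closure_singleton]
  simp [Prod.ext_iff, eq_comm]

theorem mk_mem_range_sub_swap_iff (hf : ∀ u : ℤ × ℤ, f (mk u) = mk (u.2, u.1)) (p : ℤ × ℤ) :
    (mk p : DiagQuotient a) ∈ (AddMonoidHom.id _ - f).range ↔ 2 * a ∣ p.1 + p.2 := by
  constructor
  · rintro ⟨u, hu⟩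
    obtain ⟨u, rfl⟩ := mk_surjective u
    rw [AddMonoidHom.sub_apply, AddMonoidHom.id_apply, hf, ← mk_sub, ← sub_eq_zero, ← mk_sub,
      mk_eq_zero_iff] at hu
    obtain ⟨n, hn⟩ := hu
    simp only [Prod.ext_iff, Prod.fst_sub, Prod.snd_sub] at hn
    exact ⟨-n, by linarith [hn.1, hn.2]⟩
  · rintro ⟨n, hn⟩
    refine ⟨mk (p.1 - n * a, 0), ?_⟩
    rw [AddMonoidHom.sub_apply, AddMonoidHom.id_apply, hf, ← mk_sub, ← sub_eq_zero, ← mk_sub,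
      mk_eq_zero_iff]
    refine ⟨-n, Prod.ext (by simp) ?_⟩
    simp only [Prod.mk_sub_mk, Prod.snd_sub, sub_zero, zero_sub, neg_sub, neg_mul]
    linarith

end DiagQuotient

theorem Int.two_mul_dvd_natAbs_div_gcd_mul_iff {a : ℤ} (ha : a ≠ 0) (c : ℤ) :
    2 * a ∣ ((a.natAbs / a.gcd c : ℕ) : ℤ) * c ↔ 2 ∣ c / (a.gcd c : ℤ) := by
  have key : ((a.natAbs / a.gcd c : ℕ) : ℤ) * c = |a| * (c / a.gcd c) := by
    rw [Int.natCast_div, Int.natCast_natAbs,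
      ← Int.mul_ediv_assoc' _ ((dvd_abs _ _).mpr (Int.gcd_dvd_left a c)),
      Int.mul_ediv_assoc _ (Int.gcd_dvd_right a c)]
  rw [key, ← abs_dvd, abs_mul, abs_two, mul_comm |a|, mul_dvd_mul_iff_right (abs_ne_zero.mpr ha)]

/-- Subcase 1- of the paper: `a = b ≠ 0`, `G = ℤ²/ℤ(a,a)`, `α` the switch involution,
`w = -[(v₁,v₂)]` with `v₁ + v₂ = c`, `β u = α u + w`, `q₀ = |a| / gcd(a,c)` and
`c' = c / gcd(a,c)`. Then there is a `u` with `β^[q₀] u = u` and `q₀` odd if and only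
if `q₀` is odd and `c'` is even. -/
theorem stmt_18 (a c v₁ v₂ : ℤ) (ha : a ≠ 0) (hc : v₁ + v₂ = c)
    (α : ((ℤ × ℤ) ⧸ AddSubgroup.closure {((a, a) : ℤ × ℤ)}) ≃+
      ((ℤ × ℤ) ⧸ AddSubgroup.closure {((a, a) : ℤ × ℤ)}))
    (hswitch : ∀ u : ℤ × ℤ,
      α (QuotientAddGroup.mk u) = QuotientAddGroup.mk (u.2, u.1))
    (w : (ℤ × ℤ) ⧸ AddSubgroup.closure {((a, a) : ℤ × ℤ)})
    (hw : w = -QuotientAddGroup.mk (v₁, v₂))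
    (β : ((ℤ × ℤ) ⧸ AddSubgroup.closure {((a, a) : ℤ × ℤ)}) →
      ((ℤ × ℤ) ⧸ AddSubgroup.closure {((a, a) : ℤ × ℤ)}))
    (hβ : ∀ u, β u = α u + w)
    (q₀ : ℕ) (hq₀ : q₀ = a.natAbs / Int.gcd a c)
    (c' : ℤ) (hc' : c' = c / (Int.gcd a c : ℤ)) :
    ((∃ u, β^[q₀] u = u) ∧ Odd q₀) ↔ (Odd q₀ ∧ 2 ∣ c') := by
  set f : DiagQuotient a →+ DiagQuotient a := α.toAddMonoidHom
  have hf : ∀ u : ℤ × ℤ, f (mk u) = mk (u.2, u.1) := hswitch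
  obtain rfl : β = fun u => f u + w := funext hβ
  rw [and_comm]
  refine and_congr_right fun ⟨k, hk⟩ => ?_
  have hw' : w + k • (w + f w) = mk (-(v₁ + k * c), -(v₂ + k * c)) := by
    rw [hw, map_neg, hf, ← mk_neg, ← mk_neg, ← mk_add, ← mk_nsmul, ← mk_add]
    subst hc
    simp only [Prod.neg_mk, Prod.mk_add_mk, Prod.smul_mk, Int.nsmul_eq_mul]
    congr 2 <;> ring
  rw [hk, exists_iterate_involution_add_two_mul_add_one_fixed_iff
    (DiagQuotient.involutive_of_swap hf), hw', DiagQuotient.mk_mem_range_sub_swap_iff hf, hc',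
    ← Int.two_mul_dvd_natAbs_div_gcd_mul_iff ha, ← hq₀, hk, ← dvd_neg]
  refine Iff.of_eq (congrArg _ ?_)
  push_cast
  rw [← hc]
  ring
end

section
/- Let G be a finite abelian group, α an automorphism with α² = id and (α-id)(G) = ker(α+id), w ∈ G, β(u) = α(u)+w, and q₀ the order of (α+id)(w). If q₀ is odd, then the number of orbits of β of odd cardinality equals #ker(α - id) / q₀, and the number of orbits of even cardinality equals #(G \ F) / (2q₀) where F is the fixed point set of β^(q₀) (which has cardinality #ker(α-id)). -/
/-!
Put `t = α w + w`. Then `α t = t` and `β ∘ β` is translation by `t`, so `β^[2m] u = u + m • t`.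
Applying `β^[n]` twice shows that every period `n` of a point satisfies `n • t = 0`, i.e.
`q₀ ∣ n`, while `2 q₀` is a period of every point. Hence each orbit has `q₀` or `2 q₀` elements
according as its points are fixed by `β^[q₀]` or not; for odd `q₀` these are the odd and the
even orbits. Finally `β^[q₀] u = α u + c` with `α c + c = q₀ • t = 0`, so by the hypothesis on
`α` this affine map has a fixed point `u₀`, and its fixed points are the `u₀ + g` with `α g = g`.
-/

open Function

theorem Nat.card_eq_card_mul_of_card_fiber_eq {A B : Type*} [Finite A] [Finite B] (f : A → B)
    {n : ℕ} (h : ∀ b, Nat.card {a // f a = b} = n) :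
    Nat.card A = Nat.card B * n := by
  have := Fintype.ofFinite B
  calc Nat.card A = Nat.card (Σ b, {a // f a = b}) :=
        (Nat.card_congr (Equiv.sigmaFiberEquiv f)).symm
    _ = ∑ b, Nat.card {a // f a = b} := Nat.card_sigma
    _ = Nat.card B * n := by simp [h, Nat.card_eq_fintype_card]

namespace Function

variable {X : Type*} {f : X → X} {x y : X}

theorem range_iterate_eq_of_mem (hx : x ∈ periodicPts f) (hy : y ∈ Set.range fun n => f^[n] x) :
    (Set.range fun n => f^[n] y) = Set.range fun n => f^[n] x := by
  obtain ⟨m, rfl⟩ := hy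
  have hy : f^[m] x ∈ periodicPts f := mk_mem_periodicPts
    (minimalPeriod_pos_of_mem_periodicPts hx) ((isPeriodicPt_minimalPeriod f x).apply_iterate m)
  ext z
  rw [Set.mem_range, Set.mem_range, ← mem_periodicOrbit_iff hx, ← mem_periodicOrbit_iff hy,
    periodicOrbit_apply_iterate_eq hx]

theorem card_range_iterate (hx : x ∈ periodicPts f) :
    Nat.card (Set.range fun n => f^[n] x) = minimalPeriod f x := by
  have hrange : (Set.range fun n => f^[n] x) = (f^[·] x) '' Set.Iio (minimalPeriod f x) := by
    refine subset_antisymm ?_ (Set.image_subset_range _ _)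
    rintro _ ⟨n, rfl⟩
    exact ⟨n % minimalPeriod f x, Nat.mod_lt _ (minimalPeriod_pos_of_mem_periodicPts hx),
      iterate_mod_minimalPeriod_eq⟩
  rw [hrange, Nat.card_image_of_injOn iterate_injOn_Iio_minimalPeriod, Nat.card_coe_set_eq,
    Set.ncard_Iio_nat]

theorem card_orbits_mul_eq [Finite X] (hf : ∀ x, x ∈ periodicPts f) (P : ℕ → Prop) {n : ℕ}
    (hP : ∀ x, P (minimalPeriod f x) → minimalPeriod f x = n) :
    Nat.card {s : Set X // (∃ x, s = Set.range fun k => f^[k] x) ∧ P (Nat.card s)} * n =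
      Nat.card {x // P (minimalPeriod f x)} := by
  let orbit (x : {x // P (minimalPeriod f x)}) :
      {s : Set X // (∃ x, s = Set.range fun k => f^[k] x) ∧ P (Nat.card s)} :=
    ⟨_, ⟨x, rfl⟩, (card_range_iterate (hf x)).symm ▸ x.2⟩
  refine (Nat.card_eq_card_mul_of_card_fiber_eq orbit ?_).symm
  rintro ⟨s, ⟨y, rfl⟩, hy⟩
  rw [card_range_iterate (hf y)] at hy
  rw [← hP y hy, ← card_range_iterate (hf y)]
  refine Nat.card_congr
    ⟨fun a => ⟨a.1.1, ?_⟩, fun z => ⟨⟨z.1, ?_⟩, ?_⟩, fun _ => rfl, fun _ => rfl⟩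
  · have horbit : (Set.range fun k => f^[k] a.1.1) = Set.range fun k => f^[k] y :=
      congrArg Subtype.val a.2
    exact horbit.subset ⟨0, rfl⟩
  · obtain ⟨m, hm⟩ := z.2
    rwa [← hm, minimalPeriod_apply_iterate (hf y)]
  · exact Subtype.ext (range_iterate_eq_of_mem (hf y) z.2)

end Function

theorem card_fixedPoints_add_const {G F : Type*} [AddCommGroup G] [FunLike F G G]
    [AddMonoidHomClass F G G] {α : F} {c u₀ : G} (hu₀ : α u₀ + c = u₀) :
    Nat.card {u : G | α u + c = u} = Nat.card {g : G | α g = g} := by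
  refine Nat.card_congr (Equiv.subtypeEquiv (Equiv.subRight u₀) fun u => ?_)
  rw [Set.mem_ofPred_eq, Set.mem_ofPred_eq, Equiv.subRight_apply, map_sub]
  grind

namespace InvolutiveAffine

variable {G F : Type*} [AddCommGroup G] [FunLike F G G] [AddMonoidHomClass F G G] {α : F}
  {w : G} {β : G → G}

theorem map_add_self (hα : ∀ g, α (α g) = g) : α (α w + w) = α w + w := by
  rw [map_add, hα, add_comm]

theorem iterate_two_mul_apply (hα : ∀ g, α (α g) = g) (hβ : ∀ u, β u = α u + w)
    (m : ℕ) (u : G) : β^[2 * m] u = u + m • (α w + w) := by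
  induction m generalizing u with
  | zero => simp
  | succ m ih =>
    rw [Nat.mul_succ, iterate_add_apply, ih, iterate_succ_apply', iterate_one, hβ, hβ, map_add,
      hα, succ_nsmul]
    abel

theorem iterate_two_mul_add_one_apply (hα : ∀ g, α (α g) = g) (hβ : ∀ u, β u = α u + w)
    (m : ℕ) (u : G) : β^[2 * m + 1] u = α u + (w + m • (α w + w)) := by
  rw [iterate_succ_apply', iterate_two_mul_apply hα hβ, hβ, map_add, map_nsmul, map_add_self hα,
    add_assoc, add_comm (m • _)]

theorem addOrderOf_dvd_of_isPeriodicPt (hα : ∀ g, α (α g) = g) (hβ : ∀ u, β u = α u + w)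
    {n : ℕ} {u : G} (h : IsPeriodicPt β n u) : addOrderOf (α w + w) ∣ n := by
  have h2 : β^[2 * n] u = u := h.const_mul 2
  rw [iterate_two_mul_apply hα hβ, add_eq_left] at h2
  exact addOrderOf_dvd_of_nsmul_eq_zero h2

theorem isPeriodicPt_two_mul_addOrderOf (hα : ∀ g, α (α g) = g) (hβ : ∀ u, β u = α u + w)
    (u : G) : IsPeriodicPt β (2 * addOrderOf (α w + w)) u := by
  rw [IsPeriodicPt, IsFixedPt, iterate_two_mul_apply hα hβ, addOrderOf_nsmul_eq_zero, add_zero]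

theorem mem_periodicPts [Finite G] (hα : ∀ g, α (α g) = g) (hβ : ∀ u, β u = α u + w)
    (u : G) : u ∈ periodicPts β :=
  ⟨_, Nat.mul_pos two_pos (addOrderOf_pos _), isPeriodicPt_two_mul_addOrderOf hα hβ u⟩

theorem minimalPeriod_eq_addOrderOf (hα : ∀ g, α (α g) = g) (hβ : ∀ u, β u = α u + w)
    {u : G} (h : IsPeriodicPt β (addOrderOf (α w + w)) u) :
    minimalPeriod β u = addOrderOf (α w + w) :=
  Nat.dvd_antisymm h.minimalPeriod_dvd
    (addOrderOf_dvd_of_isPeriodicPt hα hβ (isPeriodicPt_minimalPeriod β u))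

theorem minimalPeriod_eq_two_mul_addOrderOf [Finite G] (hα : ∀ g, α (α g) = g)
    (hβ : ∀ u, β u = α u + w) {u : G} (h : ¬ IsPeriodicPt β (addOrderOf (α w + w)) u) :
    minimalPeriod β u = 2 * addOrderOf (α w + w) := by
  obtain ⟨j, hj⟩ := addOrderOf_dvd_of_isPeriodicPt hα hβ (isPeriodicPt_minimalPeriod β u)
  have hdvd : addOrderOf (α w + w) * j ∣ addOrderOf (α w + w) * 2 := by
    rw [← hj, mul_comm]
    exact (isPeriodicPt_two_mul_addOrderOf hα hβ u).minimalPeriod_dvd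
  rcases (Nat.dvd_prime Nat.prime_two).mp
    (Nat.dvd_of_mul_dvd_mul_left (addOrderOf_pos _) hdvd) with rfl | rfl
  · rw [mul_one] at hj
    exact absurd (hj ▸ isPeriodicPt_minimalPeriod β u) h
  · rw [hj, mul_comm]

theorem odd_minimalPeriod_iff [Finite G] (hα : ∀ g, α (α g) = g) (hβ : ∀ u, β u = α u + w)
    (hodd : Odd (addOrderOf (α w + w))) (u : G) :
    Odd (minimalPeriod β u) ↔ IsPeriodicPt β (addOrderOf (α w + w)) u := by
  refine ⟨fun hu => ?_, fun h => minimalPeriod_eq_addOrderOf hα hβ h ▸ hodd⟩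
  by_contra h
  rw [minimalPeriod_eq_two_mul_addOrderOf hα hβ h] at hu
  exact Nat.not_odd_iff_even.mpr (even_two_mul _) hu

theorem card_isPeriodicPt_addOrderOf (hα : ∀ g, α (α g) = g) (hβ : ∀ u, β u = α u + w)
    (hker : ∀ x : G, (∃ g : G, α g - g = x) ↔ α x + x = 0)
    (hodd : Odd (addOrderOf (α w + w))) :
    Nat.card {u : G | β^[addOrderOf (α w + w)] u = u} = Nat.card {g : G | α g = g} := by
  obtain ⟨k, hk⟩ := hodd
  have hfixed : {u : G | β^[addOrderOf (α w + w)] u = u} =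
      {u | α u + (w + k • (α w + w)) = u} := by
    ext u
    rw [Set.mem_ofPred_eq, Set.mem_ofPred_eq, hk, iterate_two_mul_add_one_apply hα hβ]
  have hc : α (w + k • (α w + w)) + (w + k • (α w + w)) = 0 :=
    calc _ = (2 * k + 1) • (α w + w) := by
          rw [map_add, map_nsmul, map_add_self hα, succ_nsmul, mul_nsmul']
          abel
      _ = 0 := hk ▸ addOrderOf_nsmul_eq_zero _
  obtain ⟨u₀, hu₀⟩ :=
    (hker (-(w + k • (α w + w)))).mpr (by rw [map_neg, ← neg_add, hc, neg_zero])
  rw [hfixed, card_fixedPoints_add_const (u₀ := u₀) (by grind)]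

theorem card_odd_orbits_mul [Finite G] (hα : ∀ g, α (α g) = g) (hβ : ∀ u, β u = α u + w)
    (hodd : Odd (addOrderOf (α w + w))) :
    Nat.card {s : Set G // (∃ u, s = Set.range fun n => β^[n] u) ∧ Odd (Nat.card s)} *
        addOrderOf (α w + w) = Nat.card {u : G | β^[addOrderOf (α w + w)] u = u} :=
  (card_orbits_mul_eq (mem_periodicPts hα hβ) Odd fun u hu =>
    minimalPeriod_eq_addOrderOf hα hβ ((odd_minimalPeriod_iff hα hβ hodd u).mp hu)).trans
  (Nat.card_congr (Equiv.subtypeEquivRight (odd_minimalPeriod_iff hα hβ hodd)))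

theorem card_even_orbits_mul [Finite G] (hα : ∀ g, α (α g) = g) (hβ : ∀ u, β u = α u + w)
    (hodd : Odd (addOrderOf (α w + w))) :
    Nat.card {s : Set G // (∃ u, s = Set.range fun n => β^[n] u) ∧ Even (Nat.card s)} *
        (2 * addOrderOf (α w + w)) =
      Nat.card G - Nat.card {u : G | β^[addOrderOf (α w + w)] u = u} := by
  have hiff (u : G) :
      Even (minimalPeriod β u) ↔ u ∈ {u : G | β^[addOrderOf (α w + w)] u = u}ᶜ := by
    rw [← Nat.not_odd_iff_even, odd_minimalPeriod_iff hα hβ hodd]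
    rfl
  rw [card_orbits_mul_eq (mem_periodicPts hα hβ) Even fun u hu =>
      minimalPeriod_eq_two_mul_addOrderOf hα hβ ((hiff u).mp hu),
    Nat.card_congr (Equiv.subtypeEquivRight hiff), Nat.card_coe_set_eq, Set.ncard_compl,
    Nat.card_coe_set_eq]

end InvolutiveAffine

open InvolutiveAffine in
/-- Orbit counting of Theorem 3.1: `G` a finite abelian group, `α` an automorphism with
`α² = id` and `(α - id)(G) = ker (α + id)`, `w ∈ G`, `β u = α u + w`, and
`q₀ = addOrderOf (α w + w)` odd. Then the number of orbits of `β` of odd cardinality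
is `#ker(α - id) / q₀`, the number of orbits of even cardinality is
`#(G \ F) / (2q₀)` where `F` is the fixed point set of `β^[q₀]`, and
`#F = #ker(α - id)`. -/
theorem stmt_19 {G : Type*} [AddCommGroup G] [Finite G] (α : G ≃+ G)
    (hα : ∀ g, α (α g) = g)
    (hker : ∀ x : G, (∃ g : G, α g - g = x) ↔ α x + x = 0)
    (w : G) (β : G → G) (hβ : ∀ u, β u = α u + w)
    (q₀ : ℕ) (hq₀ : q₀ = addOrderOf (α w + w)) (hodd : Odd q₀)
    (orb : G → Set G) (horb : ∀ u, orb u = {v | ∃ n : ℕ, β^[n] u = v}) :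
    Nat.card {s : Set G // (∃ u, s = orb u) ∧ Odd (Nat.card s)} =
        Nat.card {g : G | α g = g} / q₀ ∧
      Nat.card {s : Set G // (∃ u, s = orb u) ∧ Even (Nat.card s)} =
        (Nat.card G - Nat.card {u : G | β^[q₀] u = u}) / (2 * q₀) ∧
      Nat.card {u : G | β^[q₀] u = u} = Nat.card {g : G | α g = g} := by
  obtain rfl : orb = fun u => Set.range fun n => β^[n] u := funext horb
  subst hq₀
  beta_reduce
  have hfixed := card_isPeriodicPt_addOrderOf hα hβ hker hodd
  refine ⟨?_, ?_, hfixed⟩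
  · rw [← hfixed, ← card_odd_orbits_mul hα hβ hodd, Nat.mul_div_cancel _ (addOrderOf_pos _)]
  · rw [← card_even_orbits_mul hα hβ hodd,
      Nat.mul_div_cancel _ (Nat.mul_pos two_pos (addOrderOf_pos _))]
end
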